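/- arXiv:1810.11597 — 4 statements merged into one kernel-verified Lean document; each statement's English description precedes it below -/
import Mathlib

section
/- Let A_x be a k×k pattern over a field that is upper-triangulable with unit diagonal after row and column permutations σ, τ (i.e., A_x(σ(i),τ(j)) has some 1 on the diagonal and some 0 strictly below it). For each j ∈ Fin k, let B_j be a pattern on n_j × m_j matrices. Define the block pattern E on (Σ n_{σ⁻¹(i)}) × (Σ m_j) matrices whose (i,j)-th block is: the pattern B_j if A_x(i,j) = some 1; the all-(some 0) pattern if A_x(i,j) = some 0; and the all-unknown pattern if A_x(i,j) = none. Then minrank(E) = Σ_{j=1}^{k} minrank(B_j). -/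
/-!
Upper bound: filling every `some 1` block of column `j` with one optimal completion of `B j`
and every other block with `0` completes `E`, and each column block of this matrix has rank at
most that of the completion placed in it.

Lower bound: in an optimal completion of `E`, the blocks in block rows `σ i'` and block columns
`τ i` with `i < i'` vanish, while the diagonal blocks complete the `B (τ i)`. Choosing
independent rows in every diagonal block, as many as its rank, gives independent rows of the
whole matrix: a vanishing combination, restricted to the columns of the earliest block with a
nonzero coefficient, would be a vanishing combination inside that block.
-/

/-- A pattern: a partially specified matrix, `none` denoting an unknown entry. -/
def Pattern (α β F : Type*) := α → β → Option F

/-- A matrix `M` completes a pattern `A` if it agrees with all determined entries. -/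
def Completes {α β F : Type*} (M : Matrix α β F) (A : Pattern α β F) : Prop :=
  ∀ i j c, A i j = some c → M i j = c

/-- The minrank of a pattern: the minimum rank over all its completions. -/
noncomputable def minrank {α β F : Type*} [Fintype α] [Fintype β] [Field F]
    (A : Pattern α β F) : ℕ :=
  sInf {r | ∃ M : Matrix α β F, Completes M A ∧ M.rank = r}

open Module Submodule

theorem exists_completes_rank_eq_minrank {α β F : Type*} [Fintype α] [Fintype β] [Field F]
    (A : Pattern α β F) : ∃ M : Matrix α β F, Completes M A ∧ M.rank = minrank A :=
  Nat.sInf_mem (s := {r | ∃ M : Matrix α β F, Completes M A ∧ M.rank = r})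
    ⟨_, Matrix.of fun i j => (A i j).getD 0, fun i j c hc => by simp [hc], rfl⟩

theorem minrank_le_rank {α β F : Type*} [Fintype α] [Fintype β] [Field F] {A : Pattern α β F}
    {M : Matrix α β F} (hM : Completes M A) : minrank A ≤ M.rank :=
  Nat.sInf_le ⟨M, hM, rfl⟩

theorem Submodule.finrank_iSup_le_sum {K V ι : Type*} [DivisionRing K] [AddCommGroup V]
    [Module K V] [FiniteDimensional K V] [Fintype ι] (p : ι → Submodule K V) :
    finrank K ↥(⨆ i, p i) ≤ ∑ i, finrank K (p i) := by
  classical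
  rw [← Finset.sup_univ_eq_iSup]
  induction (Finset.univ : Finset ι) using Finset.induction_on with
  | empty => simp
  | insert a s ha ih =>
    rw [Finset.sup_insert, Finset.sum_insert ha]
    exact (finrank_add_le_finrank_add_finrank _ _).trans (Nat.add_le_add_left ih _)

theorem Matrix.rank_le_sum_rank_submatrix_sigma {F m J : Type*} [Field F] [Fintype m]
    [Fintype J] {β : J → Type*} [∀ j, Fintype (β j)] (M : Matrix m (Σ j, β j) F) :
    M.rank ≤ ∑ j, (M.submatrix id (Sigma.mk j)).rank := by
  simp only [rank_eq_finrank_span_cols]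
  rw [Set.range_sigma_eq_iUnion_range M.col, span_iUnion]
  exact finrank_iSup_le_sum _

theorem Matrix.rank_le_rank_of_row_mem_span {F m m' n : Type*} [Field F] [Fintype m]
    [Fintype m'] [Fintype n] {M : Matrix m n F} {N : Matrix m' n F}
    (h : ∀ i, N i ∈ span F (Set.range M)) : N.rank ≤ M.rank := by
  rw [rank_eq_finrank_span_row, rank_eq_finrank_span_row]
  exact finrank_mono (span_le.2 (Set.range_subset_iff.2 h))

theorem Matrix.exists_linearIndependent_rows {F m n : Type*} [Field F] [Fintype m] [Fintype n]
    (M : Matrix m n F) : ∃ r : Fin M.rank → m, LinearIndependent F fun x => M (r x) := by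
  obtain ⟨κ, a, ha, hspan, hli⟩ := exists_linearIndependent' F M.row
  have : Finite κ := Finite.of_injective a ha
  have : Fintype κ := Fintype.ofFinite κ
  have hrows : LinearIndependent F (M.submatrix a id).row := hli
  have hcard : Fintype.card κ = M.rank := by
    rw [← hrows.rank_matrix, rank_eq_finrank_span_row (M.submatrix a id),
      rank_eq_finrank_span_row M, ← hspan]
    rfl
  exact ⟨a ∘ (Fintype.equivFinOfCardEq hcard).symm, hli.comp _ (Equiv.injective _)⟩

theorem linearIndependent_sigma_of_triangular {R V κ : Type*} [Ring R] [AddCommGroup V]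
    [Module R V] [Fintype κ] [LinearOrder κ] {ι : κ → Type*} [∀ i, Fintype (ι i)]
    {W : κ → Type*} [∀ i, AddCommGroup (W i)] [∀ i, Module R (W i)]
    (v : (Σ i, ι i) → V) (π : ∀ i, V →ₗ[R] W i)
    (hdiag : ∀ i, LinearIndependent R fun x => π i (v ⟨i, x⟩))
    (hbelow : ∀ i i', i < i' → ∀ x, π i (v ⟨i', x⟩) = 0) : LinearIndependent R v := by
  rw [Fintype.linearIndependent_iff]
  intro g hg
  suffices ∀ i x, g ⟨i, x⟩ = 0 from fun p => this p.1 p.2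
  intro i
  induction i using WellFoundedLT.induction with
  | _ i ih =>
  have hproj : ∑ x, g ⟨i, x⟩ • π i (v ⟨i, x⟩) = 0 := by
    have := congrArg (π i) hg
    simp only [map_sum, map_smul, map_zero, Fintype.sum_sigma] at this
    rw [← this, Fintype.sum_eq_single i]
    intro i' hi'
    rcases hi'.lt_or_gt with hlt | hgt
    · simp [ih i' hlt]
    · simp [hbelow i i' hgt]
  exact Fintype.linearIndependent_iff.1 (hdiag i) _ hproj

theorem Matrix.sum_rank_diagonal_blocks_le_rank {F κ I J : Type*} [Field F] [Fintype κ]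
    [LinearOrder κ] [Fintype J] {α : I → Type*} {β : J → Type*} [∀ i, Fintype (α i)]
    [∀ j, Fintype (β j)] (M : Matrix (Σ i, α i) (Σ j, β j) F) (σ : κ → I) (τ : κ → J)
    (hM : ∀ i i', i < i' → ∀ a b, M ⟨σ i', a⟩ ⟨τ i, b⟩ = 0) :
    ∑ i, (M.submatrix (Sigma.mk (σ i)) (Sigma.mk (τ i))).rank ≤ M.rank := by
  set D := fun i => M.submatrix (Sigma.mk (σ i)) (Sigma.mk (τ i))
  choose r hr using fun i => (D i).exists_linearIndependent_rows
  let rows : (Σ i, Fin (D i).rank) → Σ i, α i := fun x => ⟨σ x.1, r x.1 x.2⟩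
  have hli : LinearIndependent F (M.submatrix rows id).row :=
    linearIndependent_sigma_of_triangular _ (fun i => LinearMap.funLeft F F (Sigma.mk (τ i)))
      hr (fun i i' hii' x => funext fun b => hM i i' hii' _ b)
  calc ∑ i, (D i).rank = Fintype.card (Σ i, Fin (D i).rank) := by simp
    _ = (M.submatrix rows id).rank := hli.rank_matrix.symm
    _ ≤ M.rank := rank_submatrix_le _ _ _

section BlockExtension

variable {F ι κ : Type*} [Field F] {n m : κ → ℕ} {h : ι → ℕ}

open scoped Classical in
noncomputable def blockCompletion (A : Pattern ι κ F) (heq : ∀ i j, A i j = some 1 → h i = n j)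
    (M : ∀ j, Matrix (Fin (n j)) (Fin (m j)) F) :
    Matrix ((i : ι) × Fin (h i)) ((j : κ) × Fin (m j)) F :=
  Matrix.of fun p q =>
    if hpq : A p.1 q.1 = some 1 then M q.1 (Fin.cast (heq _ _ hpq) p.2) q.2 else 0

theorem rank_blockCompletion_le [Fintype ι] [Fintype κ] {A : Pattern ι κ F}
    (heq : ∀ i j, A i j = some 1 → h i = n j) (M : ∀ j, Matrix (Fin (n j)) (Fin (m j)) F) :
    (blockCompletion A heq M).rank ≤ ∑ j, (M j).rank := by
  refine (Matrix.rank_le_sum_rank_submatrix_sigma _).trans (Finset.sum_le_sum fun j _ => ?_)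
  refine Matrix.rank_le_rank_of_row_mem_span fun p => ?_
  by_cases hp : A p.1 j = some 1
  · exact subset_span ⟨Fin.cast (heq _ _ hp) p.2, by ext b; simp [blockCompletion, hp]⟩
  · have hzero : (blockCompletion A heq M).submatrix id (Sigma.mk j) p = 0 := by
      ext b
      simp [blockCompletion, hp]
    exact hzero ▸ zero_mem _

theorem completes_blockCompletion {A : Pattern ι κ F}
    {B : ∀ j, Pattern (Fin (n j)) (Fin (m j)) F}
    {E : Pattern ((i : ι) × Fin (h i)) ((j : κ) × Fin (m j)) F}
    (hA01 : ∀ i j c, A i j = some c → c = 0 ∨ c = 1)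
    (heq : ∀ i j, A i j = some 1 → h i = n j)
    (hE1 : ∀ (i j) (hij : A i j = some 1) (a : Fin (h i)) (b : Fin (m j)),
      E ⟨i, a⟩ ⟨j, b⟩ = B j (Fin.cast (heq i j hij) a) b)
    (hE0 : ∀ i j, A i j = some 0 → ∀ a b, E ⟨i, a⟩ ⟨j, b⟩ = some 0)
    (hEx : ∀ i j, A i j = none → ∀ a b, E ⟨i, a⟩ ⟨j, b⟩ = none)
    {M : ∀ j, Matrix (Fin (n j)) (Fin (m j)) F} (hM : ∀ j, Completes (M j) (B j)) :
    Completes (blockCompletion A heq M) E := by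
  rintro ⟨i, a⟩ ⟨j, b⟩ c hc
  rcases hA : A i j with _ | c'
  · simp [hEx i j hA] at hc
  · obtain rfl | rfl := hA01 i j c' hA
    · rw [hE0 i j hA, Option.some_inj] at hc
      simp [blockCompletion, hA, ← hc]
    · rw [hE1 i j hA] at hc
      simpa [blockCompletion, hA] using hM j _ _ _ hc

theorem minrank_le_rank_submatrix_of_completes [Fintype ι] [Fintype κ] {A : Pattern ι κ F}
    {B : ∀ j, Pattern (Fin (n j)) (Fin (m j)) F}
    {E : Pattern ((i : ι) × Fin (h i)) ((j : κ) × Fin (m j)) F}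
    (heq : ∀ i j, A i j = some 1 → h i = n j)
    (hE1 : ∀ (i j) (hij : A i j = some 1) (a : Fin (h i)) (b : Fin (m j)),
      E ⟨i, a⟩ ⟨j, b⟩ = B j (Fin.cast (heq i j hij) a) b)
    {M : Matrix ((i : ι) × Fin (h i)) ((j : κ) × Fin (m j)) F} (hM : Completes M E)
    {i : ι} {j : κ} (hij : A i j = some 1) :
    minrank (B j) ≤ (M.submatrix (Sigma.mk i) (Sigma.mk j)).rank := by
  rw [← Matrix.rank_submatrix _ (finCongr (heq i j hij)).symm (Equiv.refl _)]
  refine minrank_le_rank fun a b c hc => hM _ _ c ?_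
  rw [hE1 i j hij]
  simpa using hc

end BlockExtension

/-- If the base pattern `A` is upper-triangulable with unit diagonal, then the minrank of
the block-extended pattern `E` (blocks `B j` at the `some 1` entries of column `j`, zero
blocks at `some 0` entries, unknown blocks at unknown entries) equals the sum of the
minranks of the component patterns. -/
theorem minrank_extension_upperTriangulable {F : Type*} [Field F] (k : ℕ)
    (A : Pattern (Fin k) (Fin k) F)
    (hA01 : ∀ i j c, A i j = some c → c = 0 ∨ c = 1)
    (n m h : Fin k → ℕ)
    (B : (j : Fin k) → Pattern (Fin (n j)) (Fin (m j)) F)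
    (σ τ : Equiv.Perm (Fin k))
    (hdiag : ∀ i : Fin k, A (σ i) (τ i) = some 1)
    (hlow : ∀ i j : Fin k, j < i → A (σ i) (τ j) = some 0)
    (heq : ∀ i j, A i j = some 1 → h i = n j)
    (E : Pattern ((i : Fin k) × Fin (h i)) ((j : Fin k) × Fin (m j)) F)
    (hE1 : ∀ (i j : Fin k) (hij : A i j = some 1) (a : Fin (h i)) (b : Fin (m j)),
      E ⟨i, a⟩ ⟨j, b⟩ = B j (Fin.cast (heq i j hij) a) b)
    (hE0 : ∀ (i j : Fin k), A i j = some 0 →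
      ∀ (a : Fin (h i)) (b : Fin (m j)), E ⟨i, a⟩ ⟨j, b⟩ = some 0)
    (hEx : ∀ (i j : Fin k), A i j = none →
      ∀ (a : Fin (h i)) (b : Fin (m j)), E ⟨i, a⟩ ⟨j, b⟩ = none) :
    minrank E = ∑ j : Fin k, minrank (B j) := by
  refine le_antisymm ?_ ?_
  · choose M hMB hMrank using fun j => exists_completes_rank_eq_minrank (B j)
    calc minrank E ≤ (blockCompletion A heq M).rank :=
          minrank_le_rank (completes_blockCompletion hA01 heq hE1 hE0 hEx hMB)
      _ ≤ ∑ j, (M j).rank := rank_blockCompletion_le heq M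
      _ = ∑ j, minrank (B j) := by simp only [hMrank]
  · obtain ⟨M, hME, hMrank⟩ := exists_completes_rank_eq_minrank E
    have hbelow : ∀ i i', i < i' → ∀ a b, M ⟨σ i', a⟩ ⟨τ i, b⟩ = 0 := fun i i' hii' a b =>
      hME _ _ _ (hE0 _ _ (hlow i' i hii') a b)
    calc ∑ j, minrank (B j) = ∑ i, minrank (B (τ i)) := (Equiv.sum_comp τ _).symm
      _ ≤ ∑ i, (M.submatrix (Sigma.mk (σ i)) (Sigma.mk (τ i))).rank :=
          Finset.sum_le_sum fun i _ =>
            minrank_le_rank_submatrix_of_completes heq hE1 hME (hdiag i)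
      _ ≤ M.rank := M.sum_rank_diagonal_blocks_le_rank σ τ hbelow
      _ = minrank E := hMrank
end

section
/- Let A and B be matrices over a field of sizes n×m and p×q respectively, completing patterns A_x and B_x (patterns are functions into Option F_q; a completion agrees with all determined entries). Suppose every determined entry of A_x is 0 or 1. Define the lexicographic block pattern L_x on (np)×(mq) matrices whose (i,j)-th block (i ∈ Fin n, j ∈ Fin m) is: B_x if A_x(i,j) = some 1; the all-(some 0) pattern if A_x(i,j) = some 0; and the all-unknown pattern if A_x(i,j) = none. Then the Kronecker product A ⊗ B completes L_x, and consequently minrank(L_x) ≤ rank(A) · rank(B). -/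
/-!
A completion `A` of a 0/1-pattern `Ax` and a completion `B` of `Bx` give the Kronecker product
`A ⊗ B` as a completion of the lexicographic pattern: its `(i, j)` block is `A i j • B`, which is
`B` where `Ax i j = some 1`, zero where `Ax i j = some 0`, and unconstrained elsewhere. Writing
`A = C₁ D₁` and `B = C₂ D₂` through `rank A` and `rank B` inner columns, the mixed-product rule
gives `A ⊗ B = (C₁ ⊗ C₂)(D₁ ⊗ D₂)`, so `A ⊗ B` has rank at most `rank A * rank B`.
-/

open Matrix

namespace Matrix

variable {F : Type*} [Field F] {m n o p : Type*} [Fintype n]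

theorem exists_eq_mul_of_rank (M : Matrix m n F) :
    ∃ (C : Matrix m (Fin M.rank) F) (D : Matrix (Fin M.rank) n F), M = C * D := by
  set S : Submodule F (m → F) := Submodule.span F (Set.range Mᵀ)
  have : FiniteDimensional F S := FiniteDimensional.span_of_finite F (Set.finite_range _)
  let b : Module.Basis (Fin M.rank) F S :=
    Module.finBasisOfFinrankEq F S M.rank_eq_finrank_span_cols.symm
  have hcol (j : n) : Mᵀ j ∈ S := Submodule.subset_span ⟨j, rfl⟩
  refine ⟨fun i k => (b k : m → F) i, fun k j => b.repr ⟨Mᵀ j, hcol j⟩ k, ?_⟩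
  ext i j
  have hsum := congrArg (fun v : S => (v : m → F) i) (b.sum_repr ⟨Mᵀ j, hcol j⟩)
  simp only [Submodule.coe_sum, Submodule.coe_smul, Finset.sum_apply, Pi.smul_apply,
    smul_eq_mul] at hsum
  exact hsum.symm.trans (Finset.sum_congr rfl fun k _ => mul_comm _ _)

theorem rank_kroneckerMap_mul_le [Fintype p]
    (A : Matrix m n F) (B : Matrix o p F) :
    (kroneckerMap (· * ·) A B).rank ≤ A.rank * B.rank := by
  obtain ⟨C₁, D₁, hA⟩ := A.exists_eq_mul_of_rank
  obtain ⟨C₂, D₂, hB⟩ := B.exists_eq_mul_of_rank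
  calc (kroneckerMap (· * ·) A B).rank
      = (kroneckerMap (· * ·) C₁ C₂ * kroneckerMap (· * ·) D₁ D₂).rank := by
        rw [← mul_kronecker_mul, ← hA, ← hB]
    _ ≤ (kroneckerMap (· * ·) C₁ C₂).rank := rank_mul_le_left _ _
    _ ≤ Fintype.card (Fin A.rank × Fin B.rank) := rank_le_card_width _
    _ = A.rank * B.rank := by simp

end Matrix

theorem minrank_le_rank_of_completes {α β F : Type*} [Fintype α] [Fintype β] [Field F]
    {P : Pattern α β F} {M : Matrix α β F} (hM : Completes M P) : minrank P ≤ M.rank :=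
  Nat.sInf_le ⟨M, hM, rfl⟩

theorem completes_kroneckerMap_lex {F α β γ δ : Type*} [MulZeroOneClass F]
    {Ax : Pattern α β F} {Bx : Pattern γ δ F} {A : Matrix α β F} {B : Matrix γ δ F}
    (hA : Completes A Ax) (hB : Completes B Bx)
    (hAx01 : ∀ i j c, Ax i j = some c → c = 0 ∨ c = 1) {L : Pattern (α × γ) (β × δ) F}
    (hL1 : ∀ i j, Ax i j = some 1 → ∀ a b, L (i, a) (j, b) = Bx a b)
    (hL0 : ∀ i j, Ax i j = some 0 → ∀ a b, L (i, a) (j, b) = some 0)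
    (hLx : ∀ i j, Ax i j = none → ∀ a b, L (i, a) (j, b) = none) :
    Completes (kroneckerMap (· * ·) A B) L := by
  rintro ⟨i, a⟩ ⟨j, b⟩ c hc
  rw [kroneckerMap_apply]
  cases hAij : Ax i j with
  | none => simp [hLx i j hAij a b] at hc
  | some d =>
    rcases hAx01 i j d hAij with rfl | rfl
    · obtain rfl := Option.some.inj ((hL0 i j hAij a b).symm.trans hc)
      rw [hA i j 0 hAij, zero_mul]
    · rw [hA i j 1 hAij, hB a b c ((hL1 i j hAij a b).symm.trans hc), one_mul]

/-- The Kronecker product of completions completes the lexicographic block pattern, and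
hence `minrank L ≤ rank A * rank B`. -/
theorem kronecker_completes_lex {F : Type*} [Field F] (n m p q : ℕ)
    (Ax : Pattern (Fin n) (Fin m) F) (Bx : Pattern (Fin p) (Fin q) F)
    (A : Matrix (Fin n) (Fin m) F) (B : Matrix (Fin p) (Fin q) F)
    (hA : Completes A Ax) (hB : Completes B Bx)
    (hAx01 : ∀ i j c, Ax i j = some c → c = 0 ∨ c = 1)
    (L : Pattern (Fin n × Fin p) (Fin m × Fin q) F)
    (hL1 : ∀ i j, Ax i j = some 1 → ∀ a b, L (i, a) (j, b) = Bx a b)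
    (hL0 : ∀ i j, Ax i j = some 0 → ∀ a b, L (i, a) (j, b) = some 0)
    (hLx : ∀ i j, Ax i j = none → ∀ a b, L (i, a) (j, b) = none) :
    Completes (Matrix.kroneckerMap (· * ·) A B) L ∧ minrank L ≤ A.rank * B.rank := by
  have hcomp := completes_kroneckerMap_lex hA hB hAx01 hL1 hL0 hLx
  exact ⟨hcomp, (minrank_le_rank_of_completes hcomp).trans (rank_kroneckerMap_mul_le A B)⟩
end

section
/- Let C_m (m ≥ 2) be the cycle pattern on m×m matrices over F_2: C_m(i,i) = some 1 for all i, C_m(i, i+1 mod m) = none, and C_m(i,j) = some 0 otherwise. Then minrank(C_m) = m − 1. -/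
/-- The cycle pattern on `m ≥ 2` messages over `F₂` has minrank `m - 1`. -/
theorem minrank_cycle {m : ℕ} (hm : 2 ≤ m)
    (C : Pattern (Fin m) (Fin m) (ZMod 2))
    (hC : ∀ i j : Fin m, C i j =
      if i = j then some 1
      else if (j : ℕ) = ((i : ℕ) + 1) % m then none
      else some 0) :
    minrank C = m - 1 := by
  classical
  have hpos : 0 < m := by omega
  -- Lower bound: every completion has rank ≥ m - 1.
  have lower : ∀ M : Matrix (Fin m) (Fin m) (ZMod 2), Completes M C → m - 1 ≤ M.rank := by
    intro M hM
    set f : Fin (m - 1) → Fin m := fun k => ⟨(k : ℕ) + 1, by omega⟩ with hf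
    set B : Matrix (Fin (m - 1)) (Fin (m - 1)) (ZMod 2) := M.submatrix f f with hB
    have htri : B.BlockTriangular id := by
      intro k l hlt
      simp only [Function.id_def] at hlt
      apply hM
      rw [hC]
      have h1 : ¬ (f k = f l) := by
        simp only [hf, Fin.ext_iff]
        omega
      have h2 : ¬ ((f l : ℕ) = ((f k : ℕ) + 1) % m) := by
        simp only [hf]
        have hk : (k : ℕ) < m - 1 := k.2
        have hl : (l : ℕ) < m - 1 := l.2
        have hlk : (l : ℕ) < (k : ℕ) := hlt
        rcases Nat.lt_or_ge ((k : ℕ) + 2) m with h | h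
        · rw [Nat.mod_eq_of_lt h]; omega
        · rw [show (k : ℕ) + 1 + 1 = m by omega, Nat.mod_self]
          omega
      simp [h1, h2]
    have hdiag : ∀ k, B k k = 1 := by
      intro k
      apply hM
      rw [hC]
      simp
    have hdet : B.det = 1 := by
      rw [Matrix.det_of_upperTriangular htri]
      exact Finset.prod_eq_one fun k _ => hdiag k
    have hBrank : B.rank = m - 1 := by
      rw [Matrix.rank_of_isUnit B (by
        rw [Matrix.isUnit_iff_isUnit_det, hdet]; exact isUnit_one)]
      simp
    -- Express B as P * M * Q to compare ranks.
    set P : Matrix (Fin (m - 1)) (Fin m) (ZMod 2) :=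
      Matrix.of fun k i => if i = f k then 1 else 0 with hP
    set Q : Matrix (Fin m) (Fin (m - 1)) (ZMod 2) :=
      Matrix.of fun i k => if i = f k then 1 else 0 with hQ
    have hPMQ : B = P * (M * Q) := by
      ext k l
      simp only [hB, hP, hQ, Matrix.submatrix_apply, Matrix.mul_apply, Matrix.of_apply,
        ite_mul, one_mul, zero_mul, Finset.sum_ite_eq, Finset.mem_univ, if_true,
        mul_ite, mul_one, mul_zero, Finset.sum_ite_eq', Finset.sum_ite_eq]
    calc m - 1 = B.rank := hBrank.symm
      _ ≤ (M * Q).rank := by rw [hPMQ]; exact Matrix.rank_mul_le_right P (M * Q)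
      _ ≤ M.rank := Matrix.rank_mul_le_left M Q
  -- Upper bound: a completion of rank ≤ m - 1.
  set M₀ : Matrix (Fin m) (Fin m) (ZMod 2) :=
    Matrix.of fun i j => if i = j ∨ (j : ℕ) = ((i : ℕ) + 1) % m then 1 else 0 with hM₀
  have hcomp : Completes M₀ C := by
    intro i j c h
    rw [hC] at h
    by_cases hij : i = j
    · simp [hij] at h
      simp [hM₀, hij, ← h]
    · by_cases hnext : (j : ℕ) = ((i : ℕ) + 1) % m
      · simp [hij, hnext] at h
      · simp [hij, hnext] at h
        simp [hM₀, hij, hnext, ← h]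
  -- The all-ones vector is in the kernel.
  have hker : M₀.mulVecLin (fun _ => 1) = 0 := by
    funext i
    have hne : i ≠ (⟨((i : ℕ) + 1) % m, Nat.mod_lt _ hpos⟩ : Fin m) := by
      intro heq
      have h' : (i : ℕ) = ((i : ℕ) + 1) % m := congrArg Fin.val heq
      rcases Nat.lt_or_ge ((i : ℕ) + 1) m with h | h
      · rw [Nat.mod_eq_of_lt h] at h'; omega
      · have hi : (i : ℕ) < m := i.2
        rw [show (i : ℕ) + 1 = m by omega, Nat.mod_self] at h'
        omega
    have : ∀ j : Fin m, (i = j ∨ (j : ℕ) = ((i : ℕ) + 1) % m) ↔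
        (j = i ∨ j = (⟨((i : ℕ) + 1) % m, Nat.mod_lt _ hpos⟩ : Fin m)) := by
      intro j
      constructor
      · rintro (h | h)
        · exact Or.inl h.symm
        · exact Or.inr (Fin.ext h)
      · rintro (h | h)
        · exact Or.inl h.symm
        · exact Or.inr (by rw [h])
    simp only [Matrix.mulVecLin_apply, Matrix.mulVec, dotProduct, hM₀,
      Matrix.of_apply, mul_one, Pi.zero_apply]
    rw [Finset.sum_congr rfl fun j _ => if_congr (this j) rfl rfl]
    set j₀ : Fin m := (⟨((i : ℕ) + 1) % m, Nat.mod_lt _ hpos⟩ : Fin m) with hj₀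
    have hsplit : ∀ j : Fin m, (if j = i ∨ j = j₀ then (1 : ZMod 2) else 0) =
        (if j = i then 1 else 0) + (if j = j₀ then 1 else 0) := by
      intro j
      by_cases h1 : j = i <;> by_cases h2 : j = j₀
      · exact absurd (h1.symm.trans h2) hne
      · simpa [h1, h2] using hne
      · simpa [h1, h2] using (Ne.symm hne)
      · simp [h1, h2]
    rw [Finset.sum_congr rfl fun j _ => hsplit j, Finset.sum_add_distrib,
      Finset.sum_ite_eq' Finset.univ i (fun _ => (1 : ZMod 2)),
      Finset.sum_ite_eq' Finset.univ j₀ (fun _ => (1 : ZMod 2))]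
    simp only [Finset.mem_univ, if_true]
    decide
  -- Rank of the completion is at most m - 1.
  have hrank : M₀.rank ≤ m - 1 := by
    have hrn := LinearMap.finrank_range_add_finrank_ker M₀.mulVecLin
    have hdom : Module.finrank (ZMod 2) (Fin m → ZMod 2) = m := by simp
    rw [hdom] at hrn
    have hkerpos : 0 < Module.finrank (ZMod 2) (LinearMap.ker M₀.mulVecLin) := by
      rw [Module.finrank_pos_iff_exists_ne_zero]
      refine ⟨⟨fun _ => 1, by rw [LinearMap.mem_ker]; exact hker⟩, ?_⟩
      simp only [ne_eq, Submodule.mk_eq_zero]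
      intro h
      have := congrFun h ⟨0, hpos⟩
      simp at this
    have hR : M₀.rank = Module.finrank (ZMod 2) (LinearMap.range M₀.mulVecLin) := rfl
    omega
  -- Conclude.
  apply le_antisymm
  · exact le_trans (Nat.sInf_le ⟨M₀, hcomp, rfl⟩) hrank
  · obtain ⟨M, hMc, hMr⟩ := Nat.sInf_mem
      (⟨M₀.rank, M₀, hcomp, rfl⟩ : Set.Nonempty
        {r | ∃ M : Matrix (Fin m) (Fin m) (ZMod 2), Completes M C ∧ M.rank = r})
    rw [minrank, ← hMr]
    exact lower M hMc
end

section
/- Let C_m be the cycle pattern on m×m matrices over F_2 (as in the cycle SUICP: C_m(i,i)=some 1, C_m(i,i+1 mod m)=none, some 0 elsewhere), and for each j ∈ Fin m let F^{(j)}_x be a pattern on n_j × m_j matrices. Define the jointly extended pattern F^E_x whose (i,j)-th block is F^{(j)}_x if C_m(i,j) = some 1 (i.e., i = j), all-unknown if C_m(i,j) = none, and all-(some 0) otherwise. Then minrank(F^E_x) = (Σ_{j=1}^{m} minrank(F^{(j)}_x)) − min_{j} minrank(F^{(j)}_x). -/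
namespace MinrankAux

open Matrix

variable {F : Type*} [Field F]

/-- Rectangular version of `Matrix.rank_reindex`. -/
lemma rank_reindex' {k l m n : Type*} [Fintype l] [Fintype n] (e₁ : k ≃ m) (e₂ : l ≃ n)
    (M : Matrix k l F) : (Matrix.reindex e₁ e₂ M).rank = M.rank := by
  rw [Matrix.rank, Matrix.rank, Matrix.mulVecLin_reindex, LinearMap.range_comp,
    LinearMap.range_comp, LinearEquiv.range, Submodule.map_top, LinearEquiv.finrank_map_eq]

/-- Extension by zero on the left component. -/
def extLeft (α₁ α₂ : Type*) : (α₁ → F) →ₗ[F] ((α₁ ⊕ α₂) → F) where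
  toFun x := Sum.elim x 0
  map_add' x y := by ext (a|a) <;> simp
  map_smul' c x := by ext (a|a) <;> simp

lemma extLeft_injective {α₁ α₂ : Type*} : Function.Injective (extLeft (F := F) α₁ α₂) := by
  intro x y h
  funext a
  exact congrFun h (Sum.inl a)

/-- The rank of a block matrix with vanishing lower-left block is at least the sum of the
ranks of the two diagonal blocks. -/
lemma rank_blocks_le {α₁ α₂ β₁ β₂ : Type*} [Fintype α₁] [Fintype α₂] [Fintype β₁] [Fintype β₂]
    (M : Matrix (α₁ ⊕ α₂) (β₁ ⊕ β₂) F)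
    (h0 : ∀ a b, M (Sum.inr a) (Sum.inl b) = 0) :
    (Matrix.of fun a b => M (Sum.inl a) (Sum.inl b)).rank
      + (Matrix.of fun a b => M (Sum.inr a) (Sum.inr b)).rank ≤ M.rank := by
  classical
  set A : Matrix α₁ β₁ F := Matrix.of fun a b => M (Sum.inl a) (Sum.inl b) with hA
  set D : Matrix α₂ β₂ F := Matrix.of fun a b => M (Sum.inr a) (Sum.inr b) with hD
  set W := LinearMap.range M.mulVecLin with hW
  let π : ((α₁ ⊕ α₂) → F) →ₗ[F] (α₂ → F) := LinearMap.funLeft F F Sum.inr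
  let g : W →ₗ[F] (α₂ → F) := π ∘ₗ W.subtype
  have key : Module.finrank F (LinearMap.range g) + Module.finrank F (LinearMap.ker g)
      = Module.finrank F W := LinearMap.finrank_range_add_finrank_ker g
  have hD1 : D.rank ≤ Module.finrank F (LinearMap.range g) := by
    have hle : LinearMap.range D.mulVecLin ≤ LinearMap.range g := by
      rintro x ⟨v, rfl⟩
      refine ⟨⟨M.mulVec (Sum.elim 0 v), ⟨Sum.elim 0 v, rfl⟩⟩, ?_⟩
      funext a
      show (M.mulVec (Sum.elim 0 v)) (Sum.inr a) = D.mulVec v a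
      simp only [Matrix.mulVec, dotProduct, Fintype.sum_sum_type, Sum.elim_inl,
        Sum.elim_inr, Pi.zero_apply, mul_zero, Finset.sum_const_zero, zero_add]
      rfl
    exact Submodule.finrank_mono hle
  have hA1 : A.rank ≤ Module.finrank F (LinearMap.ker g) := by
    let φ₀ : (LinearMap.range A.mulVecLin) →ₗ[F] ((α₁ ⊕ α₂) → F) :=
      (extLeft α₁ α₂) ∘ₗ (LinearMap.range A.mulVecLin).subtype
    have hmem : ∀ y, φ₀ y ∈ W := by
      rintro ⟨x, v, rfl⟩
      refine ⟨Sum.elim v 0, ?_⟩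
      funext c
      cases c with
      | inl a =>
        show (M.mulVec (Sum.elim v 0)) (Sum.inl a) = A.mulVec v a
        simp only [Matrix.mulVec, dotProduct, Fintype.sum_sum_type, Sum.elim_inl,
          Sum.elim_inr, Pi.zero_apply, mul_zero, Finset.sum_const_zero, add_zero]
        rfl
      | inr a =>
        show (M.mulVec (Sum.elim v 0)) (Sum.inr a) = 0
        simp [Matrix.mulVec, dotProduct, Fintype.sum_sum_type, h0]
    let φ₁ := φ₀.codRestrict W hmem
    have hker : ∀ y, φ₁ y ∈ LinearMap.ker g := by
      intro y
      rw [LinearMap.mem_ker]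
      funext a
      rfl
    let φ := LinearMap.codRestrict (LinearMap.ker g) φ₁ hker
    have hinj : Function.Injective φ := by
      intro y y' h
      have h2 : φ₁ y = φ₁ y' := congrArg Subtype.val h
      have h1 : φ₀ y = φ₀ y' := congrArg Subtype.val h2
      exact Subtype.ext (extLeft_injective h1)
    exact LinearMap.finrank_le_finrank_of_injective hinj
  calc A.rank + D.rank
      ≤ Module.finrank F (LinearMap.ker g) + Module.finrank F (LinearMap.range g) :=
        Nat.add_le_add hA1 hD1
    _ = Module.finrank F W := by rw [Nat.add_comm]; exact key
    _ = M.rank := rfl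

/-- Splitting off the zeroth piece of a `Fin (p+1)`-indexed sigma type. -/
def sigmaFinSuccEquiv {p : ℕ} (α : Fin (p + 1) → Type*) :
    ((k : Fin (p + 1)) × α k) ≃ (α 0 ⊕ ((k : Fin p) × α k.succ)) where
  toFun x := Fin.cases (motive := fun k => α k → α 0 ⊕ ((k : Fin p) × α k.succ))
    (fun a => Sum.inl a) (fun k a => Sum.inr ⟨k, a⟩) x.1 x.2
  invFun x := Sum.elim (fun a => ⟨0, a⟩) (fun y => ⟨y.1.succ, y.2⟩) x
  left_inv := by
    rintro ⟨k, a⟩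
    induction k using Fin.cases with
    | zero => rfl
    | succ k => rfl
  right_inv := by rintro (a | ⟨k, a⟩) <;> rfl

/-- Staircase bound: if all blocks strictly below the diagonal vanish, the rank is at least
the sum of the ranks of the diagonal blocks. -/
lemma staircase : ∀ (p : ℕ) (α β : Fin p → Type) (_ : ∀ k, Fintype (α k)) (_ : ∀ k, Fintype (β k))
    (M : Matrix ((k : Fin p) × α k) ((l : Fin p) × β l) F),
    (∀ (k l : Fin p) (a : α k) (b : β l), (l : ℕ) < (k : ℕ) → M ⟨k, a⟩ ⟨l, b⟩ = 0) →
    ∑ k : Fin p, (Matrix.of fun (a : α k) (b : β k) => M ⟨k, a⟩ ⟨k, b⟩).rank ≤ M.rank := by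
  intro p
  induction p with
  | zero => intro α β _ _ M hM; simp
  | succ p ih =>
    intro α β hα hβ M hM
    letI : ∀ k, Fintype (α k) := hα
    letI : ∀ k, Fintype (β k) := hβ
    set M' := Matrix.reindex (sigmaFinSuccEquiv α) (sigmaFinSuccEquiv β) M with hM'
    have hrank : M'.rank = M.rank := rank_reindex' _ _ _
    have h0 : ∀ a b, M' (Sum.inr a) (Sum.inl b) = 0 := by
      rintro ⟨k, a⟩ b
      exact hM _ _ _ _ (Nat.succ_pos _)
    have hblocks := rank_blocks_le M' h0
    have hIH := ih (fun k => α k.succ) (fun k => β k.succ) (fun k => hα _) (fun k => hβ _)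
      (Matrix.of fun (x : (k : Fin p) × α k.succ) (y : (l : Fin p) × β l.succ) =>
        M ⟨x.1.succ, x.2⟩ ⟨y.1.succ, y.2⟩)
      (by
        rintro k l a b hlt
        exact hM _ _ _ _ (by simpa using hlt))
    rw [Fin.sum_univ_succ]
    exact le_trans (Nat.add_le_add (le_refl _) hIH) (hblocks.trans hrank.le)

/-- Any matrix factors through `Fin rank`. -/
lemma exists_factor {α β : Type*} [Fintype α] [Fintype β] [DecidableEq β] (A : Matrix α β F) :
    ∃ (C : Matrix α (Fin A.rank) F) (D : Matrix (Fin A.rank) β F), A = C * D := by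
  classical
  set W := LinearMap.range A.mulVecLin with hW
  have hA : A.rank = Module.finrank F W := rfl
  let b : Module.Basis (Fin A.rank) F W := (Module.finBasis F W).reindex (finCongr hA.symm)
  have hcol : ∀ j : β, (fun i => A i j) ∈ W := by
    intro j
    refine ⟨Pi.single j 1, ?_⟩
    funext i
    simp [Matrix.mulVecLin_apply]
  refine ⟨fun a c => (b c : α → F) a, fun c j => b.repr ⟨fun i => A i j, hcol j⟩ c, ?_⟩
  ext a j
  have h1 := b.sum_repr ⟨fun i => A i j, hcol j⟩
  show A a j = ∑ c, (b c : α → F) a * b.repr ⟨fun i => A i j, hcol j⟩ c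
  have h3 : A a j
      = (((∑ i : Fin A.rank, (b.repr ⟨fun i => A i j, hcol j⟩) i • b i : W) : α → F)) a := by
    rw [h1]
  rw [h3, Submodule.coe_sum, Finset.sum_apply]
  refine Finset.sum_congr rfl fun c _ => ?_
  simp [mul_comm]

/-- Summation over a sigma type as an iterated sum. -/
lemma sum_sigma_eq {ι : Type*} [Fintype ι] (γ : ι → Type*) [∀ i, Fintype (γ i)]
    {M : Type*} [AddCommMonoid M] (f : ((i : ι) × γ i) → M) :
    ∑ x : (i : ι) × γ i, f x = ∑ i, ∑ c : γ i, f ⟨i, c⟩ := by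
  rw [← Finset.univ_sigma_univ, Finset.sum_sigma]

lemma sum_ite_val {R : Type*} [NonAssocSemiring R] {q : ℕ} (t c : ℕ) (hc : c < q) :
    ∑ d : Fin q, (if (d : ℕ) = t then (1 : R) else 0) * (if (d : ℕ) = c then 1 else 0)
      = if t = c then 1 else 0 := by
  rw [Finset.sum_eq_single (⟨c, hc⟩ : Fin q)]
  · have hcc : ((⟨c, hc⟩ : Fin q) : ℕ) = c := rfl
    rw [hcc, if_pos rfl, mul_one]
    by_cases h : t = c
    · rw [if_pos h.symm, if_pos h]
    · rw [if_neg (fun hh => h hh.symm), if_neg h]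
  · intro d _ hd
    have hd' : (d : ℕ) ≠ c := fun h => hd (Fin.ext h)
    simp [hd']
  · simp

end MinrankAux

open MinrankAux Matrix

/-- Theorem 3: for a joint extension whose base problem is the cycle on `m` messages,
the minrank of the extended pattern is the sum of the component minranks minus the
smallest component minrank. -/
theorem minrank_extension_cycle {m : ℕ} (hm : 2 ≤ m)
    (nj mj : Fin m → ℕ)
    (Fj : (j : Fin m) → Pattern (Fin (nj j)) (Fin (mj j)) (ZMod 2))
    (E : Pattern ((i : Fin m) × Fin (nj i)) ((j : Fin m) × Fin (mj j)) (ZMod 2))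
    (hEd : ∀ (i : Fin m) (a : Fin (nj i)) (b : Fin (mj i)), E ⟨i, a⟩ ⟨i, b⟩ = Fj i a b)
    (hEn : ∀ i j : Fin m, (j : ℕ) = ((i : ℕ) + 1) % m →
      ∀ (a : Fin (nj i)) (b : Fin (mj j)), E ⟨i, a⟩ ⟨j, b⟩ = none)
    (hE0 : ∀ i j : Fin m, i ≠ j → (j : ℕ) ≠ ((i : ℕ) + 1) % m →
      ∀ (a : Fin (nj i)) (b : Fin (mj j)), E ⟨i, a⟩ ⟨j, b⟩ = some 0) :
    minrank E = (∑ j : Fin m, minrank (Fj j)) - ⨅ j : Fin m, minrank (Fj j) := by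
  classical
  haveI : NeZero m := ⟨by omega⟩
  set r : Fin m → ℕ := fun j => minrank (Fj j) with hr
  -- basic Fin m arithmetic
  have hone : ((1 : Fin m) : ℕ) = 1 := by
    rw [Fin.val_one']
    exact Nat.mod_eq_of_lt (by omega)
  have haddone : ∀ i : Fin m, ((i + 1 : Fin m) : ℕ) = ((i : ℕ) + 1) % m := by
    intro i
    rw [Fin.val_add, hone]
  have hmodval : ∀ i : Fin m, ((i : ℕ) + 1) % m = if (i : ℕ) + 1 < m then (i : ℕ) + 1 else 0 := by
    intro i
    split
    · exact Nat.mod_eq_of_lt (by omega)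
    · have hi : (i : ℕ) + 1 = m := by have := i.isLt; omega
      rw [hi, Nat.mod_self]
  have hsucc : ∀ i j : Fin m, ((j : ℕ) = ((i : ℕ) + 1) % m) ↔ j = i + 1 := by
    intro i j
    rw [Fin.ext_iff, haddone]
  have hne1 : ∀ i : Fin m, i + 1 ≠ i := by
    intro i h
    have h1 := congrArg (fun x : Fin m => (x : ℕ)) h
    simp only [haddone] at h1
    rw [hmodval] at h1
    have := i.isLt
    split at h1 <;> omega
  -- the infimum is attained at j0
  have hrne : (Set.range r).Nonempty := ⟨r 0, Set.mem_range_self 0⟩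
  obtain ⟨j0, hj0⟩ := Nat.sInf_mem hrne
  have hmin : ∀ j, r j0 ≤ r j := fun j => hj0 ▸ Nat.sInf_le ⟨j, rfl⟩
  have hiInf : (⨅ j, r j) = r j0 := hj0.symm
  -- minimal completions of the component patterns
  have exmin : ∀ j : Fin m, ∃ M : Matrix (Fin (nj j)) (Fin (mj j)) (ZMod 2),
      Completes M (Fj j) ∧ M.rank = r j := by
    intro j
    have hne : {t | ∃ M : Matrix (Fin (nj j)) (Fin (mj j)) (ZMod 2),
        Completes M (Fj j) ∧ M.rank = t}.Nonempty :=
      ⟨_, fun a b => (Fj j a b).getD 0, fun a b c hc => by simp [hc], rfl⟩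
    exact Nat.sInf_mem hne
  choose Mc hMc hMcrank using exmin
  ------------------------------------------------------------------
  -- Lower bound: any completion M of E has rank at least ∑ r - r j0
  ------------------------------------------------------------------
  have lower : ∀ M : Matrix ((i : Fin m) × Fin (nj i)) ((j : Fin m) × Fin (mj j)) (ZMod 2),
      Completes M E → (∑ j, r j) - r j0 ≤ M.rank := by
    intro M hME
    set rot : Fin m ≃ Fin m := Equiv.addLeft (j0 + 1) with hrot
    have hrotapp : ∀ k : Fin m, rot k = j0 + 1 + k := fun k => rfl
    have hrotlast : ∀ k : Fin m, (rot k = j0) ↔ (k : ℕ) = m - 1 := by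
      intro k
      rw [hrotapp]
      constructor
      · intro h
        have h1 := congrArg (fun x : Fin m => (x : ℕ)) h
        simp only [Fin.val_add, hone] at h1
        have hj := j0.isLt
        have hk := k.isLt
        rcases Nat.lt_or_ge ((j0 : ℕ) + 1 + (k : ℕ)) m with hlt | hge
        · rw [Nat.mod_add_mod, Nat.mod_eq_of_lt hlt] at h1
          omega
        · have h2 : ((j0 : ℕ) + 1 + (k : ℕ)) % m = (j0 : ℕ) + 1 + (k : ℕ) - m := by
            rw [Nat.mod_eq_sub_mod hge, Nat.mod_eq_of_lt (by omega)]
          rw [Nat.mod_add_mod] at h1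
          rw [h2] at h1
          omega
      · intro h
        have hj := j0.isLt
        apply Fin.ext
        simp only [Fin.val_add, hone, Nat.mod_add_mod]
        have : (j0 : ℕ) + 1 + (k : ℕ) = (j0 : ℕ) + m := by omega
        rw [this, Nat.add_mod_right, Nat.mod_eq_of_lt hj]
    -- the rotated and partially zeroed matrix
    set M₂ : Matrix ((k : Fin m) × Fin (nj (rot k))) ((l : Fin m) × Fin (mj (rot l))) (ZMod 2) :=
      fun x y => if (x.1 : ℕ) = m - 1 then 0 else M ⟨rot x.1, x.2⟩ ⟨rot y.1, y.2⟩ with hM₂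
    -- M₂ has rank at most that of M
    have hM₂rank : M₂.rank ≤ M.rank := by
      set eR : ((k : Fin m) × Fin (nj (rot k))) ≃ ((i : Fin m) × Fin (nj i)) :=
        Equiv.sigmaCongrLeft (β := fun i => Fin (nj i)) rot with heR
      set eC : ((l : Fin m) × Fin (mj (rot l))) ≃ ((j : Fin m) × Fin (mj j)) :=
        Equiv.sigmaCongrLeft (β := fun j => Fin (mj j)) rot with heC
      have h3 : (M.submatrix eR eC).rank = M.rank := by
        have h4 := rank_reindex' (F := ZMod 2) eR.symm eC.symm M
        rwa [Matrix.reindex_apply, Equiv.symm_symm, Equiv.symm_symm] at h4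
      have hfac : M₂ = Matrix.diagonal (fun (x : (k : Fin m) × Fin (nj (rot k))) =>
          if (x.1 : ℕ) = m - 1 then (0 : ZMod 2) else 1) * (M.submatrix eR eC) := by
        ext x y
        rw [Matrix.diagonal_mul]
        obtain ⟨k, a⟩ := x
        obtain ⟨l, b⟩ := y
        by_cases h : (k : ℕ) = m - 1 <;>
          simp [hM₂, h, Matrix.submatrix_apply, heR, heC, Equiv.sigmaCongrLeft]
      rw [hfac]
      exact (Matrix.rank_mul_le_right _ _).trans h3.le
    -- apply the staircase bound to M₂
    have hstair := staircase (F := ZMod 2) m (fun k => Fin (nj (rot k)))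
      (fun l => Fin (mj (rot l))) (fun k => inferInstance) (fun l => inferInstance) M₂
      (by
        intro k l a b hlt
        by_cases hk : (k : ℕ) = m - 1
        · simp [hM₂, hk]
        · have hkl : rot k ≠ rot l := by
            intro h
            have h4 := congrArg (fun x : Fin m => (x : ℕ)) (rot.injective h)
            have h4' : (k : ℕ) = (l : ℕ) := h4
            omega
          have hsup : ((rot l : ℕ)) ≠ ((rot k : ℕ) + 1) % m := by
            rw [Ne, hsucc (rot k) (rot l)]
            intro h
            rw [hrotapp, hrotapp, add_assoc (j0 + 1) k 1] at h
            have h2 : l = k + 1 := add_left_cancel h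
            have h3 := congrArg (fun x : Fin m => (x : ℕ)) h2
            simp only [haddone, hmodval] at h3
            have := k.isLt
            split at h3 <;> omega
          have hsome := hE0 (rot k) (rot l) hkl hsup a b
          have hz := hME _ _ _ hsome
          simp [hM₂, hk, hz])
    have hdiag : ∀ k : Fin m, (if (k : ℕ) = m - 1 then 0 else r (rot k)) ≤
        (Matrix.of fun (a : Fin (nj (rot k))) (b : Fin (mj (rot k))) =>
          M₂ ⟨k, a⟩ ⟨k, b⟩).rank := by
      intro k
      by_cases hk : (k : ℕ) = m - 1
      · simp [hk]
      · rw [if_neg hk]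
        have hcomp : Completes (Matrix.of fun a b => M₂ ⟨k, a⟩ ⟨k, b⟩) (Fj (rot k)) := by
          intro a b c hc
          have h1 := hEd (rot k) a b
          have h2 := hME ⟨rot k, a⟩ ⟨rot k, b⟩ c (by rw [h1, hc])
          simpa [hM₂, hk] using h2
        exact Nat.sInf_le ⟨_, hcomp, rfl⟩
    have hsum1 : (∑ k : Fin m, if (k : ℕ) = m - 1 then 0 else r (rot k)) ≤ M₂.rank :=
      le_trans (Finset.sum_le_sum fun k _ => hdiag k) hstair
    have hsum2 : (∑ k : Fin m, if (k : ℕ) = m - 1 then 0 else r (rot k))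
        = ∑ j : Fin m, if j = j0 then 0 else r j := by
      rw [← Equiv.sum_comp rot (fun j => if j = j0 then 0 else r j)]
      refine Finset.sum_congr rfl fun k _ => ?_
      by_cases hk : (k : ℕ) = m - 1
      · rw [if_pos hk, if_pos ((hrotlast k).mpr hk)]
      · rw [if_neg hk, if_neg (fun h => hk ((hrotlast k).mp h))]
    have hsum3 : (∑ j : Fin m, if j = j0 then 0 else r j) = (∑ j, r j) - r j0 := by
      have e1 : (∑ j : Fin m, r j) = r j0 + ∑ j ∈ Finset.univ.erase j0, r j :=
        (Finset.add_sum_erase _ r (Finset.mem_univ j0)).symm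
      have e2 : (∑ j : Fin m, if j = j0 then 0 else r j)
          = ∑ j ∈ Finset.univ.erase j0, r j := by
        rw [← Finset.add_sum_erase _ _ (Finset.mem_univ j0), if_pos rfl, zero_add]
        exact Finset.sum_congr rfl fun j hj => if_neg (Finset.ne_of_mem_erase hj)
      omega
    calc (∑ j, r j) - r j0 = ∑ k : Fin m, if (k : ℕ) = m - 1 then 0 else r (rot k) := by
          rw [hsum2, hsum3]
      _ ≤ M₂.rank := hsum1
      _ ≤ M.rank := hM₂rank
  ------------------------------------------------------------------
  -- Upper bound: construct a completion of rank at most ∑ r - r j0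
  ------------------------------------------------------------------
  choose Cm Dm hCD using fun j => exists_factor (F := ZMod 2) (Mc j)
  set T : Matrix ((j : Fin m) × Fin ((Mc j).rank)) ((j : Fin m) × Fin ((Mc j).rank)) (ZMod 2) :=
    fun x y => (if y.1 = x.1 ∧ (y.2 : ℕ) = (x.2 : ℕ) then 1 else 0)
      + (if y.1 = x.1 + 1 ∧ (y.2 : ℕ) = (x.2 : ℕ) then 1 else 0) with hT
  set P := Matrix.blockDiagonal' Cm with hP
  set Q := Matrix.blockDiagonal' Dm with hQ
  set N := P * T * Q with hN
  have hPT : ∀ (i : Fin m) (a : Fin (nj i)) (y : (j : Fin m) × Fin ((Mc j).rank)),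
      (P * T) ⟨i, a⟩ y = ∑ c : Fin ((Mc i).rank), Cm i a c * T ⟨i, c⟩ y := by
    intro i a y
    rw [Matrix.mul_apply, sum_sigma_eq]
    rw [Finset.sum_eq_single i]
    · refine Finset.sum_congr rfl fun c _ => ?_
      rw [hP, Matrix.blockDiagonal'_apply_eq]
    · intro k _ hk
      apply Finset.sum_eq_zero; intro c _
      rw [hP, Matrix.blockDiagonal'_apply_ne _ _ _ (Ne.symm hk), zero_mul]
    · simp
  have hNentry : ∀ (i j : Fin m) (a : Fin (nj i)) (b : Fin (mj j)), N ⟨i, a⟩ ⟨j, b⟩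
      = ∑ d : Fin ((Mc j).rank),
          (∑ c : Fin ((Mc i).rank), Cm i a c * T ⟨i, c⟩ ⟨j, d⟩) * Dm j d b := by
    intro i j a b
    rw [hN, Matrix.mul_apply, sum_sigma_eq]
    rw [Finset.sum_eq_single j]
    · refine Finset.sum_congr rfl fun d _ => ?_
      rw [hPT, hQ, Matrix.blockDiagonal'_apply_eq]
    · intro l _ hl
      apply Finset.sum_eq_zero; intro d _
      rw [hQ, Matrix.blockDiagonal'_apply_ne _ _ _ hl, mul_zero]
    · simp
  have hTdiag : ∀ (i : Fin m) (c d : Fin ((Mc i).rank)),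
      T ⟨i, c⟩ ⟨i, d⟩ = if c = d then 1 else 0 := by
    intro i c d
    have hc2 : ¬(i = i + 1 ∧ (d : ℕ) = (c : ℕ)) := fun h => hne1 i h.1.symm
    have hc1 : (i = i ∧ (d : ℕ) = (c : ℕ)) ↔ c = d := by
      simp [Fin.ext_iff, eq_comm]
    show ((if i = i ∧ (d : ℕ) = (c : ℕ) then (1 : ZMod 2) else 0)
        + (if i = i + 1 ∧ (d : ℕ) = (c : ℕ) then 1 else 0)) = if c = d then 1 else 0
    rw [if_neg hc2, add_zero, if_congr hc1 rfl rfl]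
  have hNdiag : ∀ (i : Fin m) (a : Fin (nj i)) (b : Fin (mj i)),
      N ⟨i, a⟩ ⟨i, b⟩ = Mc i a b := by
    intro i a b
    rw [hNentry]
    have h1 : ∀ d : Fin ((Mc i).rank),
        (∑ c : Fin ((Mc i).rank), Cm i a c * T ⟨i, c⟩ ⟨i, d⟩) = Cm i a d := by
      intro d
      have h2 : ∀ c : Fin ((Mc i).rank),
          Cm i a c * T ⟨i, c⟩ ⟨i, d⟩ = if c = d then Cm i a c else 0 := by
        intro c; rw [hTdiag]; by_cases h : c = d <;> simp [h]
      rw [Finset.sum_congr rfl fun c _ => h2 c, Finset.sum_ite_eq' Finset.univ d (Cm i a)]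
      simp
    rw [Finset.sum_congr rfl fun d _ => by rw [h1], ← Matrix.mul_apply, ← hCD i]
  have hNoff : ∀ (i j : Fin m) (a : Fin (nj i)) (b : Fin (mj j)), j ≠ i → j ≠ i + 1 →
      N ⟨i, a⟩ ⟨j, b⟩ = 0 := by
    intro i j a b h1 h2
    rw [hNentry]
    apply Finset.sum_eq_zero; intro d _
    have h3 : (∑ c : Fin ((Mc i).rank), Cm i a c * T ⟨i, c⟩ ⟨j, d⟩) = 0 := by
      apply Finset.sum_eq_zero; intro c _
      have h4 : T ⟨i, c⟩ ⟨j, d⟩ = 0 := by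
        have hc1 : ¬(j = i ∧ (d : ℕ) = (c : ℕ)) := fun h => h1 h.1
        have hc2 : ¬(j = i + 1 ∧ (d : ℕ) = (c : ℕ)) := fun h => h2 h.1
        show ((if j = i ∧ (d : ℕ) = (c : ℕ) then (1 : ZMod 2) else 0)
            + (if j = i + 1 ∧ (d : ℕ) = (c : ℕ) then 1 else 0)) = 0
        rw [if_neg hc1, if_neg hc2, add_zero]
      rw [h4, mul_zero]
    rw [h3, zero_mul]
  have hNcomp : Completes N E := by
    rintro ⟨i, a⟩ ⟨j, b⟩ c hc
    by_cases h1 : j = i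
    · subst h1
      rw [hNdiag]
      exact hMc j a b c ((hEd j a b).symm.trans hc)
    · by_cases h2 : j = i + 1
      · exfalso
        have h3 := hEn i j ((hsucc i j).mpr h2) a b
        rw [h3] at hc
        cases hc
      · have h0 := hE0 i j (fun h => h1 h.symm) (fun h => h2 ((hsucc i j).mp h)) a b
        have h3 : some (0 : ZMod 2) = some c := h0.symm.trans hc
        rw [hNoff i j a b h1 h2]
        exact Option.some.inj h3
  -- bound the rank of T via its kernel
  have hbound : ∀ (j : Fin m) (c : Fin ((Mc j0).rank)), (c : ℕ) < (Mc j).rank := by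
    intro j c
    have := c.isLt
    have h1 := hMcrank j0
    have h2 := hMcrank j
    have h3 := hmin j
    omega
  set v : Fin ((Mc j0).rank) → (((j : Fin m) × Fin ((Mc j).rank)) → ZMod 2) :=
    fun c x => if (x.2 : ℕ) = (c : ℕ) then 1 else 0 with hv
  have hchar : ∀ x : ZMod 2, x + x = 0 := by decide
  have hTker : ∀ c, T.mulVec (v c) = 0 := by
    intro c
    funext x
    obtain ⟨k, a⟩ := x
    show (∑ y : (l : Fin m) × Fin ((Mc l).rank), T ⟨k, a⟩ y * v c y) = 0
    rw [sum_sigma_eq]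
    have hterm : ∀ l : Fin m, (∑ d : Fin ((Mc l).rank), T ⟨k, a⟩ ⟨l, d⟩ * v c ⟨l, d⟩)
        = (if l = k then (if (a : ℕ) = (c : ℕ) then 1 else 0) else 0)
          + (if l = k + 1 then (if (a : ℕ) = (c : ℕ) then 1 else 0) else 0) := by
      intro l
      have hsplit : ∀ d : Fin ((Mc l).rank), T ⟨k, a⟩ ⟨l, d⟩ * v c ⟨l, d⟩
          = (if l = k ∧ (d : ℕ) = (a : ℕ) then 1 else 0)
              * (if (d : ℕ) = (c : ℕ) then 1 else 0)
            + (if l = k + 1 ∧ (d : ℕ) = (a : ℕ) then 1 else 0)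
              * (if (d : ℕ) = (c : ℕ) then 1 else 0) := by
        intro d
        show ((if l = k ∧ (d : ℕ) = (a : ℕ) then (1 : ZMod 2) else 0)
            + (if l = k + 1 ∧ (d : ℕ) = (a : ℕ) then 1 else 0))
            * (if (d : ℕ) = (c : ℕ) then 1 else 0) = _
        rw [add_mul]
      rw [Finset.sum_congr rfl fun d _ => hsplit d, Finset.sum_add_distrib]
      congr 1
      · by_cases hl : l = k
        · subst hl
          rw [if_pos rfl]
          have h5 := sum_ite_val (R := ZMod 2) (a : ℕ) (c : ℕ) (hbound l c)
          rw [← h5]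
          refine Finset.sum_congr rfl fun d _ => ?_
          simp
        · rw [if_neg hl]
          apply Finset.sum_eq_zero; intro d _
          rw [if_neg (fun h => hl h.1), zero_mul]
      · by_cases hl : l = k + 1
        · subst hl
          rw [if_pos rfl]
          have h5 := sum_ite_val (R := ZMod 2) (a : ℕ) (c : ℕ) (hbound (k + 1) c)
          rw [← h5]
          refine Finset.sum_congr rfl fun d _ => ?_
          simp
        · rw [if_neg hl]
          apply Finset.sum_eq_zero; intro d _
          rw [if_neg (fun h => hl h.1), zero_mul]
    rw [Finset.sum_congr rfl fun l _ => hterm l, Finset.sum_add_distrib,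
      Finset.sum_ite_eq' Finset.univ k, Finset.sum_ite_eq' Finset.univ (k + 1)]
    simp [hchar]
  have hvmem : ∀ c, v c ∈ LinearMap.ker T.mulVecLin := by
    intro c
    rw [LinearMap.mem_ker, Matrix.mulVecLin_apply]
    exact hTker c
  have hli : LinearIndependent (ZMod 2) v := by
    rw [Fintype.linearIndependent_iff]
    intro g hg c
    have h1 := congrFun hg ⟨j0, c⟩
    simp only [Finset.sum_apply, Pi.smul_apply, smul_eq_mul, Pi.zero_apply, hv] at h1
    have h2 : ∀ c' : Fin ((Mc j0).rank),
        g c' * (if (c : ℕ) = (c' : ℕ) then (1 : ZMod 2) else 0)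
          = if c' = c then g c' else 0 := by
      intro c'
      by_cases h : c' = c
      · subst h; simp
      · rw [if_neg (fun hh => h (Fin.ext hh.symm)), mul_zero, if_neg h]
    rw [Finset.sum_congr rfl fun c' _ => h2 c', Finset.sum_ite_eq' Finset.univ c g] at h1
    simpa using h1
  have hspan : Submodule.span (ZMod 2) (Set.range v) ≤ LinearMap.ker T.mulVecLin := by
    rw [Submodule.span_le]
    rintro x ⟨c, rfl⟩
    exact hvmem c
  have hker : (Mc j0).rank ≤ Module.finrank (ZMod 2) (LinearMap.ker T.mulVecLin) := by
    have h6 := finrank_span_eq_card hli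
    calc (Mc j0).rank
        = Module.finrank (ZMod 2) (Submodule.span (ZMod 2) (Set.range v)) := by
          rw [h6, Fintype.card_fin]
      _ ≤ _ := Submodule.finrank_mono hspan
  have hrn := LinearMap.finrank_range_add_finrank_ker T.mulVecLin
  have hdom : Module.finrank (ZMod 2) ((((j : Fin m) × Fin ((Mc j).rank)) → ZMod 2))
      = ∑ j, (Mc j).rank := by
    rw [Module.finrank_pi, Fintype.card_sigma]
    simp
  have hTrank : T.rank ≤ (∑ j, (Mc j).rank) - (Mc j0).rank := by
    have h7 : T.rank + Module.finrank (ZMod 2) (LinearMap.ker T.mulVecLin)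
        = ∑ j, (Mc j).rank := by
      rw [← hdom]
      exact hrn
    omega
  have hNrank : N.rank ≤ (∑ j, r j) - r j0 := by
    have h1 : N.rank ≤ T.rank :=
      le_trans (Matrix.rank_mul_le_left _ _) (Matrix.rank_mul_le_right _ _)
    calc N.rank ≤ T.rank := h1
      _ ≤ (∑ j, (Mc j).rank) - (Mc j0).rank := hTrank
      _ = (∑ j, r j) - r j0 := by
          rw [hMcrank j0]
          congr 1
          exact Finset.sum_congr rfl fun j _ => hMcrank j
  -- conclude
  have hub : minrank E ≤ (∑ j, r j) - r j0 :=
    le_trans (Nat.sInf_le ⟨N, hNcomp, rfl⟩) hNrank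
  have hlb : (∑ j, r j) - r j0 ≤ minrank E := by
    unfold minrank
    refine le_csInf ⟨N.rank, N, hNcomp, rfl⟩ ?_
    rintro b ⟨M, hM, rfl⟩
    exact lower M hM
  have h5 : (⨅ j, r j) = r j0 := hj0.symm
  rw [h5]
  exact le_antisymm hub hlb
end
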